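/- arXiv:1809.11063 — 2 statements merged into one kernel-verified Lean document; each statement's English description precedes it below -/
import Mathlib

section
/- Let Λ be a countable discrete abelian group with unimodular 2-cocycle c, and w : Λ → [0,∞) satisfying the difference bound |w(λ+μ) − w(λ)| ≤ C·w(μ) for all λ,μ. Then for a ∈ ℓ¹(Λ) with w·a ∈ ℓ¹(Λ) and b ∈ ℓ²(Λ), the commutator of multiplication by w with twisted convolution by a is bounded: ‖w·(a*_c b) − a*_c(w·b)‖_{ℓ²} ≤ C‖w·a‖_{ℓ¹}‖b‖_{ℓ²}. -/
/-!
At `λ` the commutator is `∑ μ, a μ (w λ - w (λ - μ)) b (λ - μ) c (μ, λ - μ)`, and the difference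
bound dominates its `μ`-th term by `C w μ |a μ| |b (λ - μ)|`: a translate of `b` scaled by
`C w μ |a μ|`, whose `ℓ²` norm is `C w μ |a μ| ‖b‖`. These norms are summable, so the terms sum in
the Banach space `ℓ²`, and the triangle inequality for that sum is the bound
(Young's inequality `ℓ¹ * ℓ² ⊆ ℓ²`).
-/

open scoped ENNReal

noncomputable def twistedConv {Λ : Type*} [AddCommGroup Λ] (c : Λ → Λ → ℂ)
    (a b : Λ → ℂ) (lam : Λ) : ℂ :=
  ∑' mu : Λ, a mu * b (lam - mu) * c mu (lam - mu)

section lp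

variable {α β E : Type*} [NormedAddCommGroup E] {p : ℝ≥0∞}

theorem Memℓp.comp_equiv {f : α → E} (hf : Memℓp f p) (e : β ≃ α) : Memℓp (f ∘ e) p := by
  rcases p.trichotomy with rfl | rfl | hp
  · rw [memℓp_zero_iff] at hf ⊢
    exact hf.preimage e.injective.injOn
  · rw [memℓp_infty_iff] at hf ⊢
    exact hf.mono (Set.range_comp_subset_range e fun i => ‖f i‖)
  · rw [memℓp_gen_iff hp] at hf ⊢
    exact (e.summable_iff (f := fun i => ‖f i‖ ^ p.toReal)).2 hf

theorem lp.norm_comp_equiv (hp : p ≠ 0) (f : lp (fun _ : α => E) p) (e : β ≃ α) :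
    ‖(⟨f ∘ e, (lp.memℓp f).comp_equiv e⟩ : lp (fun _ : β => E) p)‖ = ‖f‖ := by
  rcases p.trichotomy with rfl | rfl | hp'
  · exact absurd rfl hp
  · rw [lp.norm_eq_ciSup, lp.norm_eq_ciSup]
    exact e.iSup_comp (g := fun i => ‖f i‖)
  · rw [lp.norm_eq_tsum_rpow hp', lp.norm_eq_tsum_rpow hp']
    congr 1
    exact e.tsum_eq (fun i => ‖f i‖ ^ p.toReal)

theorem lp.hasSum_norm_sq (f : lp (fun _ : α => E) 2) :
    HasSum (fun i => ‖f i‖ ^ 2) (‖f‖ ^ 2) := by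
  simpa using lp.hasSum_norm (p := 2) (by norm_num) f

theorem memℓp_two_of_summable_sq {f : α → E} (hf : Summable fun i => ‖f i‖ ^ 2) :
    Memℓp f 2 :=
  memℓp_gen (by simpa using hf)

theorem lp.hasSum_apply [Fact (1 ≤ p)] {ι : Type*} {E : α → Type*}
    [∀ i, NormedAddCommGroup (E i)] {g : ι → lp E p} {S : lp E p} (h : HasSum g S) (x : α) :
    HasSum (fun i => g i x) (S x) :=
  Pi.hasSum.1 (h.map (lp.coeFnAddMonoidHom E p) lp.uniformContinuous_coe.continuous) x

end lp

section Young

variable {Λ E : Type*} [AddGroup Λ] [NormedAddCommGroup E] [NormedSpace ℝ E] [CompleteSpace E]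
  {p : ℝ≥0∞} [Fact (1 ≤ p)]

theorem exists_hasSum_norm_le_of_norm_le_mul_translate (F : Λ → Λ → E) {k : Λ → ℝ}
    (hk0 : ∀ mu, 0 ≤ k mu) (hk : Summable k) (b : lp (fun _ : Λ => E) p)
    (hF : ∀ mu lam, ‖F mu lam‖ ≤ k mu * ‖b (lam - mu)‖) :
    ∃ S : lp (fun _ : Λ => E) p,
      (∀ lam, HasSum (fun mu => F mu lam) (S lam)) ∧ ‖S‖ ≤ (∑' mu, k mu) * ‖b‖ := by
  have hp : p ≠ 0 := (zero_lt_one.trans_le Fact.out).ne'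
  let shift (mu : Λ) : lp (fun _ : Λ => E) p :=
    ⟨b ∘ Equiv.subRight mu, (lp.memℓp b).comp_equiv _⟩
  have hdom (mu lam) : ‖F mu lam‖ ≤ ‖(k mu • shift mu) lam‖ := by
    simpa [norm_smul, abs_of_nonneg (hk0 mu), shift] using hF mu lam
  let g (mu : Λ) : lp (fun _ : Λ => E) p :=
    ⟨F mu, (lp.memℓp (k mu • shift mu)).mono' (hdom mu)⟩
  have hg (mu) : ‖g mu‖ ≤ k mu * ‖b‖ := calc
    ‖g mu‖ ≤ ‖k mu • shift mu‖ := lp.norm_mono hp (hdom mu)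
    _ = k mu * ‖b‖ := by
      rw [norm_smul, Real.norm_of_nonneg (hk0 mu), lp.norm_comp_equiv hp]
  have hgs : Summable fun mu => ‖g mu‖ :=
    (hk.mul_right ‖b‖).of_nonneg_of_le (fun _ => norm_nonneg _) hg
  refine ⟨∑' mu, g mu, fun lam => lp.hasSum_apply hgs.of_norm.hasSum lam, ?_⟩
  calc ‖∑' mu, g mu‖ ≤ ∑' mu, ‖g mu‖ := norm_tsum_le_tsum_norm hgs
    _ ≤ ∑' mu, k mu * ‖b‖ := hgs.tsum_le_tsum hg (hk.mul_right _)
    _ = (∑' mu, k mu) * ‖b‖ := tsum_mul_right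

end Young

theorem mul_twistedConv_sub_twistedConv_mul {Λ : Type*} [AddCommGroup Λ] (c : Λ → Λ → ℂ)
    (w : Λ → ℝ) (a b : Λ → ℂ) (lam : Λ)
    (hab : Summable fun mu => a mu * b (lam - mu) * c mu (lam - mu))
    (hK : Summable fun mu =>
      a mu * ((w lam - w (lam - mu) : ℝ) : ℂ) * b (lam - mu) * c mu (lam - mu)) :
    (w lam : ℂ) * twistedConv c a b lam - twistedConv c a (fun t => (w t : ℂ) * b t) lam =
      ∑' mu, a mu * ((w lam - w (lam - mu) : ℝ) : ℂ) * b (lam - mu) * c mu (lam - mu) := by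
  have hsplit : (fun mu => a mu * ((w (lam - mu) : ℂ) * b (lam - mu)) * c mu (lam - mu)) =
      fun mu => (w lam : ℂ) * (a mu * b (lam - mu) * c mu (lam - mu)) -
        a mu * ((w lam - w (lam - mu) : ℝ) : ℂ) * b (lam - mu) * c mu (lam - mu) := by
    funext mu
    push_cast
    ring
  rw [twistedConv, twistedConv, hsplit, (hab.mul_left _).tsum_sub hK, tsum_mul_left, sub_sub_cancel]

theorem summable_twistedConv_summand {Λ : Type*} [AddCommGroup Λ] {c : Λ → Λ → ℂ}
    (hc : ∀ lam mu, ‖c lam mu‖ = 1) {a b : Λ → ℂ} {M : ℝ} (ha : Summable fun mu => ‖a mu‖)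
    (hb : ∀ lam, ‖b lam‖ ≤ M) (lam : Λ) :
    Summable fun mu => a mu * b (lam - mu) * c mu (lam - mu) :=
  (ha.mul_right M).of_norm_bounded fun mu => by
    simpa [hc] using mul_le_mul_of_nonneg_left (hb (lam - mu)) (norm_nonneg (a mu))

theorem norm_commutator_summand_le {Λ : Type*} [AddCommGroup Λ] {c : Λ → Λ → ℂ}
    (hc : ∀ lam mu, ‖c lam mu‖ = 1) {w : Λ → ℝ} {C : ℝ}
    (hdif : ∀ lam mu, |w (lam + mu) - w lam| ≤ C * w mu) (a b : Λ → ℂ) (mu lam : Λ) :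
    ‖a mu * ((w lam - w (lam - mu) : ℝ) : ℂ) * b (lam - mu) * c mu (lam - mu)‖ ≤
      C * (w mu * ‖a mu‖) * ‖b (lam - mu)‖ := by
  have hd : |w lam - w (lam - mu)| ≤ C * w mu := by simpa using hdif (lam - mu) mu
  simp only [norm_mul, hc, Complex.norm_real, Real.norm_eq_abs, mul_one]
  calc ‖a mu‖ * |w lam - w (lam - mu)| * ‖b (lam - mu)‖
      ≤ ‖a mu‖ * (C * w mu) * ‖b (lam - mu)‖ := by gcongr
    _ = C * (w mu * ‖a mu‖) * ‖b (lam - mu)‖ := by ring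

theorem twistedConv_commutator_bound_general {Λ : Type*} [AddCommGroup Λ]
    (c : Λ → Λ → ℂ) (hc : ∀ lam mu, ‖c lam mu‖ = 1)
    (w : Λ → ℝ) (hw : ∀ lam, 0 ≤ w lam)
    (C : ℝ) (hC : 0 ≤ C)
    (hdif : ∀ lam mu, |w (lam + mu) - w lam| ≤ C * w mu)
    (a b : Λ → ℂ)
    (ha1 : Summable fun mu => ‖a mu‖)
    (haw : Summable fun mu => w mu * ‖a mu‖)
    (hb2 : Summable fun lam => ‖b lam‖ ^ 2) :
    (Summable fun lam =>
      ‖(w lam : ℂ) * twistedConv c a b lam -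
        twistedConv c a (fun t => (w t : ℂ) * b t) lam‖ ^ 2) ∧
    Real.sqrt (∑' lam,
        ‖(w lam : ℂ) * twistedConv c a b lam -
          twistedConv c a (fun t => (w t : ℂ) * b t) lam‖ ^ 2) ≤
      C * (∑' mu, w mu * ‖a mu‖) * Real.sqrt (∑' lam, ‖b lam‖ ^ 2) := by
  have : Fact ((1 : ℝ≥0∞) ≤ 2) := ⟨one_le_two⟩
  let b₂ : lp (fun _ : Λ => ℂ) 2 := ⟨b, memℓp_two_of_summable_sq hb2⟩
  obtain ⟨S, hS, hSle⟩ := exists_hasSum_norm_le_of_norm_le_mul_translate _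
    (fun mu => mul_nonneg hC (mul_nonneg (hw mu) (norm_nonneg _))) (haw.mul_left C) b₂
    (norm_commutator_summand_le hc hdif a b)
  have hab := summable_twistedConv_summand hc ha1 (lp.norm_apply_le_norm two_ne_zero b₂)
  have hcomm : (fun lam => (w lam : ℂ) * twistedConv c a b lam -
      twistedConv c a (fun t => (w t : ℂ) * b t) lam) = S := by
    funext lam
    rw [mul_twistedConv_sub_twistedConv_mul c w a b lam (hab lam) (hS lam).summable,
      (hS lam).tsum_eq]
  have hS2 := lp.hasSum_norm_sq S
  rw [← hcomm] at hS2
  have hbnorm : ∑' lam, ‖b lam‖ ^ 2 = ‖b₂‖ ^ 2 := (lp.hasSum_norm_sq b₂).tsum_eq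
  refine ⟨hS2.summable, ?_⟩
  rw [hS2.tsum_eq, hbnorm, Real.sqrt_sq (norm_nonneg _), Real.sqrt_sq (norm_nonneg _),
    ← tsum_mul_left]
  exact hSle

/-- If `w` satisfies the difference bound `|w(λ+μ) - w(λ)| ≤ C w(μ)`, then the
commutator of multiplication by `w` with twisted convolution by `a` is bounded on `ℓ²`:
`‖w · (a *_c b) - a *_c (w · b)‖_{ℓ²} ≤ C ‖w · a‖_{ℓ¹} ‖b‖_{ℓ²}`. -/
theorem twistedConv_commutator_bound {Λ : Type*} [AddCommGroup Λ] [Countable Λ]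
    (c : Λ → Λ → ℂ) (hc : ∀ lam mu, ‖c lam mu‖ = 1)
    (w : Λ → ℝ) (hw : ∀ lam, 0 ≤ w lam)
    (C : ℝ) (hC : 0 ≤ C)
    (hdif : ∀ lam mu, |w (lam + mu) - w lam| ≤ C * w mu)
    (a b : Λ → ℂ)
    (ha1 : Summable fun mu => ‖a mu‖)
    (haw : Summable fun mu => w mu * ‖a mu‖)
    (hb2 : Summable fun lam => ‖b lam‖ ^ 2) :
    (Summable fun lam =>
      ‖(w lam : ℂ) * twistedConv c a b lam -
        twistedConv c a (fun t => (w t : ℂ) * b t) lam‖ ^ 2) ∧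
    Real.sqrt (∑' lam,
        ‖(w lam : ℂ) * twistedConv c a b lam -
          twistedConv c a (fun t => (w t : ℂ) * b t) lam‖ ^ 2) ≤
      C * (∑' mu, w mu * ‖a mu‖) * Real.sqrt (∑' lam, ‖b lam‖ ^ 2) :=
  twistedConv_commutator_bound_general c hc w hw C hC hdif a b ha1 haw hb2
end

section
/- Let Λ be a countable discrete abelian group with unimodular 2-cocycle c and w : Λ → [0,∞) with |w(λ+μ) − w(λ)| ≤ C_dif·w(μ). For the k-fold iterated commutator ad^k of multiplication-by-w with twisted convolution by a ∈ ℓ¹(Λ), applied to b ∈ ℓ²(Λ), the formula ad^k(w)(a)(b)(λ) = Σ_μ (w(λ) − w(λ−μ))^k a(μ)b(λ−μ)c(μ,λ−μ) holds, and consequently ‖ad^k(w)(a)(b)‖_{ℓ²} ≤ C_dif^k ‖w^k·a‖_{ℓ¹}‖b‖_{ℓ²}. -/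
/-- The `c`-twisted convolution operator `b ↦ a *_c b` on functions on `Λ`. -/
noncomputable def twistedConvOp {Λ : Type*} [AddCommGroup Λ] (c : Λ → Λ → ℂ)
    (a : Λ → ℂ) (b : Λ → ℂ) (lam : Λ) : ℂ :=
  ∑' mu : Λ, a mu * b (lam - mu) * c mu (lam - mu)

/-- The commutator `ad(w)(T) = [M_w, T]` of an operator `T` on functions on `Λ` with
pointwise multiplication by the weight `w`. -/
noncomputable def adW {Λ : Type*} (w : Λ → ℝ) (T : (Λ → ℂ) → (Λ → ℂ)) :
    (Λ → ℂ) → (Λ → ℂ) :=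
  fun b lam => (w lam : ℂ) * T b lam - T (fun t => (w t : ℂ) * b t) lam

/-!
The commutator `ad(w) = L - R` of post- and pre-composition with multiplication by `w` is a
difference of two commuting linear maps on the space of all operators, so the binomial theorem
expands `ad^k(w)(T)` as `∑ₘ (-1)^(k-m) C(k,m) w^m T(w^(k-m) ·)`. For twisted convolution these
finitely many sums can be merged, and the binomial theorem applied backwards leaves the kernel
factor `(w(λ) - w(λ-μ))^k`, which the difference condition bounds by `(C_dif w(μ))^k`. The
`ℓ²` estimate is then Young's inequality `‖g ⋆ f‖₂ ≤ ‖g‖₁ ‖f‖₂`, proved by weighted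
Cauchy–Schwarz in `μ` followed by Fubini.
-/

open Finset

theorem Commute.sub_pow_eq_sum_zsmul {R : Type*} [Ring R] {x y : R} (h : Commute x y) (n : ℕ) :
    (x - y) ^ n =
      ∑ m ∈ range (n + 1), ((-1) ^ (n - m) * n.choose m : ℤ) • (x ^ m * y ^ (n - m)) := by
  rw [sub_eq_add_neg, h.neg_right.add_pow]
  refine sum_congr rfl fun m _ => ?_
  rw [neg_pow', zsmul_eq_mul']
  push_cast
  simp only [mul_assoc]

section Commutator

variable {Λ : Type*} (w : Λ → ℝ)

def postMulWeight : Module.End ℂ ((Λ → ℂ) → (Λ → ℂ)) where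
  toFun T b lam := (w lam : ℂ) * T b lam
  map_add' _ _ := by ext; simp [mul_add]
  map_smul' _ _ := by ext; simp [mul_left_comm]

def preMulWeight : Module.End ℂ ((Λ → ℂ) → (Λ → ℂ)) where
  toFun T b := T fun t => (w t : ℂ) * b t
  map_add' _ _ := rfl
  map_smul' _ _ := rfl

lemma adW_eq_postMulWeight_sub_preMulWeight :
    adW w = ⇑(postMulWeight w - preMulWeight w) := rfl

lemma commute_postMulWeight_preMulWeight : Commute (postMulWeight w) (preMulWeight w) := rfl

lemma postMulWeight_pow_apply (m : ℕ) (T : (Λ → ℂ) → (Λ → ℂ)) (b : Λ → ℂ) (lam : Λ) :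
    (postMulWeight w ^ m) T b lam = (w lam : ℂ) ^ m * T b lam := by
  induction m with
  | zero => simp
  | succ m ih =>
    rw [pow_succ', Module.End.mul_apply]
    change (w lam : ℂ) * (postMulWeight w ^ m) T b lam = _
    rw [ih, pow_succ', mul_assoc]

lemma preMulWeight_pow_apply (n : ℕ) (T : (Λ → ℂ) → (Λ → ℂ)) (b : Λ → ℂ) :
    (preMulWeight w ^ n) T b = T fun t => (w t : ℂ) ^ n * b t := by
  induction n generalizing T with
  | zero => simp
  | succ n ih =>
    rw [pow_succ, Module.End.mul_apply, ih]
    change T _ = T _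
    simp only [pow_succ, mul_comm _ (w _ : ℂ), mul_assoc]

lemma adW_iterate_apply (k : ℕ) (T : (Λ → ℂ) → (Λ → ℂ)) (b : Λ → ℂ) (lam : Λ) :
    (adW w)^[k] T b lam = ∑ m ∈ range (k + 1), (((-1) ^ (k - m) * k.choose m : ℤ) : ℂ) *
      ((w lam : ℂ) ^ m * T (fun t => (w t : ℂ) ^ (k - m) * b t) lam) := by
  rw [adW_eq_postMulWeight_sub_preMulWeight, ← Module.End.coe_pow,
    (commute_postMulWeight_preMulWeight w).sub_pow_eq_sum_zsmul, LinearMap.coe_sum]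
  simp only [Finset.sum_apply]
  refine sum_congr rfl fun m _ => ?_
  rw [LinearMap.smul_apply, Pi.smul_apply, Pi.smul_apply, zsmul_eq_mul, Module.End.mul_apply,
    postMulWeight_pow_apply, preMulWeight_pow_apply]

end Commutator

section Weight

variable {Λ : Type*} [AddCommGroup Λ] {w : Λ → ℝ} {Cdif : ℝ}

lemma abs_sub_weight_sub_le (hdif : ∀ lam mu, |w (lam + mu) - w lam| ≤ Cdif * w mu)
    (lam mu : Λ) : |w lam - w (lam - mu)| ≤ Cdif * w mu := by
  simpa using hdif (lam - mu) mu

lemma weight_sub_le (hdif : ∀ lam mu, |w (lam + mu) - w lam| ≤ Cdif * w mu) (lam mu : Λ) :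
    w (lam - mu) ≤ w lam + Cdif * w mu := by
  linarith [(abs_le.mp (abs_sub_weight_sub_le hdif lam mu)).1]

lemma summable_weight_sub_pow_mul (hw : ∀ lam, 0 ≤ w lam) (hCdif : 0 ≤ Cdif)
    (hdif : ∀ lam mu, |w (lam + mu) - w lam| ≤ Cdif * w mu) {u : Λ → ℝ} (hu : ∀ mu, 0 ≤ u mu)
    {j : ℕ} (hu0 : Summable u) (huj : Summable fun mu => w mu ^ j * u mu) (lam : Λ) :
    Summable fun mu => w (lam - mu) ^ j * u mu := by
  refine .of_nonneg_of_le (fun mu => mul_nonneg (pow_nonneg (hw _) _) (hu mu)) (fun mu => ?_)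
    (((hu0.mul_left (w lam ^ j)).add (huj.mul_left (Cdif ^ j))).mul_left (2 ^ (j - 1)))
  calc w (lam - mu) ^ j * u mu
      ≤ (w lam + Cdif * w mu) ^ j * u mu :=
        mul_le_mul_of_nonneg_right (pow_le_pow_left₀ (hw _) (weight_sub_le hdif lam mu) j) (hu mu)
    _ ≤ 2 ^ (j - 1) * (w lam ^ j + (Cdif * w mu) ^ j) * u mu :=
        mul_le_mul_of_nonneg_right (add_pow_le (hw lam) (mul_nonneg hCdif (hw mu)) j) (hu mu)
    _ = 2 ^ (j - 1) * (w lam ^ j * u mu + Cdif ^ j * (w mu ^ j * u mu)) := by ring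

lemma norm_sub_weight_pow_mul_le {c : Λ → Λ → ℂ} (hc : ∀ lam mu, ‖c lam mu‖ ≤ 1)
    (hdif : ∀ lam mu, |w (lam + mu) - w lam| ≤ Cdif * w mu) (a b : Λ → ℂ) (k : ℕ)
    (lam mu : Λ) :
    ‖((w lam : ℂ) - (w (lam - mu) : ℂ)) ^ k * (a mu * b (lam - mu) * c mu (lam - mu))‖ ≤
      Cdif ^ k * (w mu ^ k * ‖a mu‖) * ‖b (lam - mu)‖ := by
  rw [norm_mul, norm_pow, ← Complex.ofReal_sub, Complex.norm_real, Real.norm_eq_abs, norm_mul,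
    norm_mul]
  calc |w lam - w (lam - mu)| ^ k * (‖a mu‖ * ‖b (lam - mu)‖ * ‖c mu (lam - mu)‖)
      ≤ (Cdif * w mu) ^ k * (‖a mu‖ * ‖b (lam - mu)‖ * 1) := by
        gcongr
        · exact pow_nonneg ((abs_nonneg _).trans (abs_sub_weight_sub_le hdif lam mu)) k
        · exact abs_sub_weight_sub_le hdif lam mu
        · exact hc _ _
    _ = Cdif ^ k * (w mu ^ k * ‖a mu‖) * ‖b (lam - mu)‖ := by ring

end Weight

section TwistedConvolution

variable {Λ : Type*} [AddCommGroup Λ] {c : Λ → Λ → ℂ} {w : Λ → ℝ} {Cdif : ℝ}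

lemma summable_twistedConv_weight_pow (hc : ∀ lam mu, ‖c lam mu‖ ≤ 1) (hw : ∀ lam, 0 ≤ w lam)
    (hCdif : 0 ≤ Cdif) (hdif : ∀ lam mu, |w (lam + mu) - w lam| ≤ Cdif * w mu)
    {a b : Λ → ℂ} {j : ℕ} (ha0 : Summable fun mu => ‖a mu‖)
    (haj : Summable fun mu => w mu ^ j * ‖a mu‖) {B : ℝ} (hb : ∀ nu, ‖b nu‖ ≤ B) (lam : Λ) :
    Summable fun mu => a mu * ((w (lam - mu) : ℂ) ^ j * b (lam - mu)) * c mu (lam - mu) := by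
  refine .of_norm_bounded ((summable_weight_sub_pow_mul hw hCdif hdif (fun _ => norm_nonneg _)
    ha0 haj lam).mul_right B) fun mu => ?_
  rw [norm_mul, norm_mul, norm_mul, norm_pow, Complex.norm_real, Real.norm_eq_abs,
    abs_of_nonneg (hw _)]
  calc ‖a mu‖ * (w (lam - mu) ^ j * ‖b (lam - mu)‖) * ‖c mu (lam - mu)‖
      ≤ ‖a mu‖ * (w (lam - mu) ^ j * ‖b (lam - mu)‖) :=
        mul_le_of_le_one_right (by have := hw (lam - mu); positivity) (hc _ _)
    _ ≤ ‖a mu‖ * (w (lam - mu) ^ j * B) := by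
        gcongr
        · exact pow_nonneg (hw _) j
        · exact hb _
    _ = w (lam - mu) ^ j * ‖a mu‖ * B := by ring

theorem adW_iterate_twistedConvOp_apply (hc : ∀ lam mu, ‖c lam mu‖ ≤ 1)
    (hw : ∀ lam, 0 ≤ w lam) (hCdif : 0 ≤ Cdif)
    (hdif : ∀ lam mu, |w (lam + mu) - w lam| ≤ Cdif * w mu) {k : ℕ} {a b : Λ → ℂ}
    (ha : ∀ i ≤ k, Summable fun mu => w mu ^ i * ‖a mu‖) {B : ℝ} (hb : ∀ nu, ‖b nu‖ ≤ B)
    (lam : Λ) :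
    (adW w)^[k] (twistedConvOp c a) b lam =
      ∑' mu, ((w lam : ℂ) - (w (lam - mu) : ℂ)) ^ k * (a mu * b (lam - mu) * c mu (lam - mu)) := by
  have ha0 : Summable fun mu => ‖a mu‖ := by simpa using ha 0 k.zero_le
  have hsummable : ∀ m ∈ range (k + 1), Summable fun mu =>
      a mu * ((w (lam - mu) : ℂ) ^ (k - m) * b (lam - mu)) * c mu (lam - mu) := fun m _ =>
    summable_twistedConv_weight_pow hc hw hCdif hdif ha0 (ha _ (k.sub_le m)) hb lam
  rw [adW_iterate_apply]
  simp only [twistedConvOp, ← tsum_mul_left]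
  rw [← Summable.tsum_finsetSum fun m hm => ((hsummable m hm).mul_left _).mul_left _]
  refine tsum_congr fun mu => ?_
  rw [(Commute.all _ _).sub_pow_eq_sum_zsmul, sum_mul]
  refine sum_congr rfl fun m _ => ?_
  rw [zsmul_eq_mul]
  ring

end TwistedConvolution

section Young

lemma abs_le_sqrt_tsum_sq {ι : Type*} {f : ι → ℝ} (hf : Summable fun i => f i ^ 2) (i : ι) :
    |f i| ≤ √(∑' i, f i ^ 2) :=
  Real.abs_le_sqrt (hf.le_tsum i fun j _ => sq_nonneg (f j))

lemma sq_tsum_le_tsum_mul_tsum_of_sq_le_mul {ι : Type*} {r f g : ι → ℝ} (hr : ∀ i, 0 ≤ r i)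
    (hf : ∀ i, 0 ≤ f i) (hg : ∀ i, 0 ≤ g i) (hfs : Summable f) (hgs : Summable g)
    (h : ∀ i, r i ^ 2 ≤ f i * g i) :
    (∑' i, r i) ^ 2 ≤ (∑' i, f i) * ∑' i, g i := by
  have hfg : 0 ≤ (∑' i, f i) * ∑' i, g i := mul_nonneg (tsum_nonneg hf) (tsum_nonneg hg)
  rw [← Real.le_sqrt (tsum_nonneg hr) hfg]
  refine tsum_le_of_sum_le' (Real.sqrt_nonneg _) fun s => ?_
  rw [Real.le_sqrt (sum_nonneg fun i _ => hr i) hfg]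
  calc (∑ i ∈ s, r i) ^ 2 ≤ (∑ i ∈ s, f i) * ∑ i ∈ s, g i :=
        sum_sq_le_sum_mul_sum_of_sq_le_mul s (fun i _ => hf i) (fun i _ => hg i) fun i _ => h i
    _ ≤ (∑' i, f i) * ∑' i, g i :=
        mul_le_mul (hfs.sum_le_tsum s fun i _ => hf i) (hgs.sum_le_tsum s fun i _ => hg i)
          (sum_nonneg fun i _ => hg i) (tsum_nonneg hf)

variable {Λ : Type*} [AddCommGroup Λ] {g f : Λ → ℝ}

lemma hasSum_tsum_mul_sub (hg : ∀ i, 0 ≤ g i) (hf : ∀ i, 0 ≤ f i) (hgs : Summable g)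
    (hfs : Summable f) :
    HasSum (fun lam => ∑' mu, g mu * f (lam - mu)) ((∑' mu, g mu) * ∑' nu, f nu) := by
  let e : Λ × Λ ≃ Λ × Λ :=
    (Equiv.prodComm Λ Λ).trans (Equiv.prodShear (Equiv.refl Λ) Equiv.subRight)
  have hprod : HasSum (fun q : Λ × Λ => g q.1 * f q.2) ((∑' mu, g mu) * ∑' nu, f nu) :=
    hgs.hasSum.mul hfs.hasSum (hgs.mul_of_nonneg hfs hg hf)
  have hsheared : HasSum (fun p : Λ × Λ => g p.2 * f (p.1 - p.2)) ((∑' mu, g mu) * ∑' nu, f nu) :=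
    e.hasSum_iff.mpr hprod
  exact hsheared.prod_fiberwise fun lam => (hsheared.summable.prod_factor lam).hasSum

theorem summable_and_sqrt_tsum_sq_conv_le (hg : ∀ i, 0 ≤ g i) (hf : ∀ i, 0 ≤ f i)
    (hgs : Summable g) (hfs : Summable fun nu => f nu ^ 2) :
    Summable (fun lam => (∑' mu, g mu * f (lam - mu)) ^ 2) ∧
      √(∑' lam, (∑' mu, g mu * f (lam - mu)) ^ 2) ≤ (∑' mu, g mu) * √(∑' nu, f nu ^ 2) := by
  have hf_le : ∀ nu, f nu ≤ √(∑' nu, f nu ^ 2) := fun nu =>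
    (le_abs_self _).trans (abs_le_sqrt_tsum_sq hfs nu)
  have hfiber : ∀ lam, Summable fun mu => g mu * f (lam - mu) ^ 2 := fun lam =>
    .of_nonneg_of_le (fun mu => mul_nonneg (hg mu) (sq_nonneg _))
      (fun mu => mul_le_mul_of_nonneg_left (pow_le_pow_left₀ (hf _) (hf_le _) 2) (hg mu))
      (hgs.mul_right _)
  have hCS : ∀ lam, (∑' mu, g mu * f (lam - mu)) ^ 2 ≤
      (∑' mu, g mu) * ∑' mu, g mu * f (lam - mu) ^ 2 := fun lam =>
    sq_tsum_le_tsum_mul_tsum_of_sq_le_mul (fun mu => mul_nonneg (hg mu) (hf _)) hg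
      (fun mu => mul_nonneg (hg mu) (sq_nonneg _)) hgs (hfiber lam) fun mu => le_of_eq (by ring)
  have hFubini := hasSum_tsum_mul_sub hg (fun nu => sq_nonneg (f nu)) hgs hfs
  have hsum : Summable fun lam => (∑' mu, g mu * f (lam - mu)) ^ 2 :=
    .of_nonneg_of_le (fun _ => sq_nonneg _) hCS (hFubini.summable.mul_left _)
  refine ⟨hsum, ?_⟩
  calc √(∑' lam, (∑' mu, g mu * f (lam - mu)) ^ 2)
      ≤ √(∑' lam, (∑' mu, g mu) * ∑' mu, g mu * f (lam - mu) ^ 2) :=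
        Real.sqrt_le_sqrt (hsum.tsum_le_tsum hCS (hFubini.summable.mul_left _))
    _ = √((∑' mu, g mu) ^ 2 * ∑' nu, f nu ^ 2) := by
        rw [tsum_mul_left, hFubini.tsum_eq, sq, mul_assoc]
    _ = (∑' mu, g mu) * √(∑' nu, f nu ^ 2) := by
        rw [Real.sqrt_mul (sq_nonneg _), Real.sqrt_sq (tsum_nonneg hg)]

end Young

theorem iterated_commutator_formula_and_bound_general {Λ : Type*} [AddCommGroup Λ]
    (c : Λ → Λ → ℂ) (hc : ∀ lam mu, ‖c lam mu‖ = 1)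
    (w : Λ → ℝ) (hw : ∀ lam, 0 ≤ w lam)
    (Cdif : ℝ) (hCdif : 0 ≤ Cdif)
    (hdif : ∀ lam mu, |w (lam + mu) - w lam| ≤ Cdif * w mu)
    (k : ℕ) (a b : Λ → ℂ)
    (ha : ∀ i ≤ k, Summable fun mu => w mu ^ i * ‖a mu‖)
    (hb2 : Summable fun lam => ‖b lam‖ ^ 2) :
    (∀ lam, (adW w)^[k] (twistedConvOp c a) b lam =
      ∑' mu : Λ, ((w lam : ℂ) - (w (lam - mu) : ℂ)) ^ k *
        (a mu * b (lam - mu) * c mu (lam - mu))) ∧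
    Real.sqrt (∑' lam, ‖(adW w)^[k] (twistedConvOp c a) b lam‖ ^ 2) ≤
      Cdif ^ k * (∑' mu, w mu ^ k * ‖a mu‖) *
        Real.sqrt (∑' lam, ‖b lam‖ ^ 2) := by
  have hc' : ∀ lam mu, ‖c lam mu‖ ≤ 1 := fun lam mu => (hc lam mu).le
  have hb : ∀ nu, ‖b nu‖ ≤ √(∑' lam, ‖b lam‖ ^ 2) := fun nu => by
    simpa using abs_le_sqrt_tsum_sq hb2 nu
  have hformula := adW_iterate_twistedConvOp_apply hc' hw hCdif hdif ha hb
  refine ⟨hformula, ?_⟩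
  set G : Λ → ℝ := fun mu => Cdif ^ k * (w mu ^ k * ‖a mu‖)
  have hG0 : ∀ mu, 0 ≤ G mu := fun mu => by have := hw mu; positivity
  have hG : Summable G := (ha k le_rfl).mul_left _
  have hpointwise : ∀ lam, ‖(adW w)^[k] (twistedConvOp c a) b lam‖ ^ 2 ≤
      (∑' mu, G mu * ‖b (lam - mu)‖) ^ 2 := fun lam => by
    rw [hformula]
    refine pow_le_pow_left₀ (norm_nonneg _) (tsum_of_norm_bounded (Summable.hasSum ?_)
      (norm_sub_weight_pow_mul_le hc' hdif a b k lam)) 2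
    exact .of_nonneg_of_le (fun mu => mul_nonneg (hG0 mu) (norm_nonneg _))
      (fun mu => mul_le_mul_of_nonneg_left (hb _) (hG0 mu)) (hG.mul_right _)
  obtain ⟨hconv, hyoung⟩ := summable_and_sqrt_tsum_sq_conv_le hG0 (fun nu => norm_nonneg (b nu))
    hG hb2
  calc √(∑' lam, ‖(adW w)^[k] (twistedConvOp c a) b lam‖ ^ 2)
      ≤ √(∑' lam, (∑' mu, G mu * ‖b (lam - mu)‖) ^ 2) := Real.sqrt_le_sqrt <|
        (hconv.of_nonneg_of_le (fun _ => sq_nonneg _) hpointwise).tsum_le_tsum hpointwise hconv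
    _ ≤ Cdif ^ k * (∑' mu, w mu ^ k * ‖a mu‖) * √(∑' lam, ‖b lam‖ ^ 2) := by
        rwa [← tsum_mul_left]

/-- For a weight `w` with `|w(λ+μ) - w(λ)| ≤ C_dif w(μ)`, the `k`-fold iterated
commutator of multiplication by `w` with twisted convolution by `a` is given by
`ad^k(w)(a)(b)(λ) = ∑_μ (w(λ) - w(λ-μ))^k a(μ) b(λ-μ) c(μ, λ-μ)`, and satisfies
`‖ad^k(w)(a)(b)‖_{ℓ²} ≤ C_dif^k ‖w^k · a‖_{ℓ¹} ‖b‖_{ℓ²}`. -/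
theorem iterated_commutator_formula_and_bound {Λ : Type*} [AddCommGroup Λ] [Countable Λ]
    (c : Λ → Λ → ℂ) (hc : ∀ lam mu, ‖c lam mu‖ = 1)
    (w : Λ → ℝ) (hw : ∀ lam, 0 ≤ w lam)
    (Cdif : ℝ) (hCdif : 0 ≤ Cdif)
    (hdif : ∀ lam mu, |w (lam + mu) - w lam| ≤ Cdif * w mu)
    (k : ℕ) (a b : Λ → ℂ)
    (ha : ∀ i ≤ k, Summable fun mu => w mu ^ i * ‖a mu‖)
    (hb2 : Summable fun lam => ‖b lam‖ ^ 2) :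
    (∀ lam, (adW w)^[k] (twistedConvOp c a) b lam =
      ∑' mu : Λ, ((w lam : ℂ) - (w (lam - mu) : ℂ)) ^ k *
        (a mu * b (lam - mu) * c mu (lam - mu))) ∧
    Real.sqrt (∑' lam, ‖(adW w)^[k] (twistedConvOp c a) b lam‖ ^ 2) ≤
      Cdif ^ k * (∑' mu, w mu ^ k * ‖a mu‖) *
        Real.sqrt (∑' lam, ‖b lam‖ ^ 2) :=
  iterated_commutator_formula_and_bound_general c hc w hw Cdif hCdif hdif k a b ha hb2
end
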